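/- The extended And-Or path split (2): for 0 ≤ i ≤ j ≤ k < m with j - i even and 0 ≤ λ ≤ (k-j-1)/2, φ_{i,j,k} = φ_{i,j,j+2λ} ∧ φ*_{j+1,j+2λ+1,k}. -/
import Mathlib


mutual
  /-- And-Or path starting with AND: `gA [t₀,…,t_{m-1}] = t₀ ∧ (t₁ ∨ (t₂ ∧ …))`. -/
  def gA : List Bool → Bool
    | [] => false
    | t :: r => t && gO r
  /-- Dual And-Or path starting with OR: `gO [t₀,…] = t₀ ∨ (t₁ ∧ …)`. -/
  def gO : List Bool → Bool
    | [] => true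
    | t :: r => t || gA r
end

/-- Extended And-Or path `φ_{i,j,k} = t_i ∧ t_{i+2} ∧ … ∧ t_{j-2} ∧ g(t_j,…,t_k)`. -/
def phi (t : ℕ → Bool) (i j k : ℕ) : Bool :=
  (((List.range' i ((j - i) / 2) 2).map t).all id) &&
    gA ((List.range' j (k + 1 - j)).map t)

/-- Dual extended And-Or path `φ*_{i,j,k} = t_i ∨ t_{i+2} ∨ … ∨ t_{j-2} ∨ g*(t_j,…,t_k)`. -/
def phiStar (t : ℕ → Bool) (i j k : ℕ) : Bool :=
  (((List.range' i ((j - i) / 2) 2).map t).any id) ||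
    gO ((List.range' j (k + 1 - j)).map t)

lemma key (t : ℕ → Bool) : ∀ lam j k, 2*lam+1 ≤ k - j →
  gA ((List.range' j (k+1-j)).map t) =
  (gA ((List.range' j (2*lam+1)).map t) &&
    ((((List.range' (j+1) lam 2).map t).any id) || gO ((List.range' (j+2*lam+1) (k - (j+2*lam))).map t))) := by
  intro lam
  induction lam with
  | zero =>
    intro j k h
    have hk : k + 1 - j = (k - j) + 1 := by omega
    have hk2 : k - j = (k - (j + 1)) + 1 := by omega
    rw [hk, List.range'_succ]
    simp [gA, gO, List.range'_succ]
  | succ n ih =>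
    intro j k h
    have hk : k + 1 - j = (k - 1 - j) + 2 := by omega
    rw [hk, List.range'_succ, List.range'_succ, List.map_cons, List.map_cons]
    have h2 : 2*n+1 ≤ k - (j+1+1) := by omega
    have H := ih (j+1+1) k h2
    have hk3 : k + 1 - (j+1+1) = k - 1 - j := by omega
    rw [hk3] at H
    have r1 : List.range' j (2*(n+1)+1) = j :: (j+1) :: List.range' (j+1+1) (2*n+1) := by
      rw [show 2*(n+1)+1 = (2*n+1)+1+1 from by ring, List.range'_succ, List.range'_succ]
    have r2 : List.range' (j+1) (n+1) 2 = (j+1) :: List.range' (j+1+2) n 2 := by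
      rw [List.range'_succ]
    have r3 : j + 2*(n+1)+1 = j+1+1+2*n+1 := by ring
    have r4 : k - (j+2*(n+1)) = k - (j+1+1+2*n) := by omega
    have r5 : j+1+2 = j+1+1+1 := by ring
    rw [r1, r2, r3, r4, r5, List.map_cons, List.map_cons, List.map_cons, List.any_cons]
    simp only [gA, gO, H, id]
    cases t (j+1) <;> cases gA ((List.range' (j+1+1) (2 * n + 1)).map t) <;>
      cases ((List.range' (j+1+1+1) n 2).map t).any id <;>
      cases gO ((List.range' (j+1+1+2*n+1) (k - (j+1+1+2*n))).map t) <;> simp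

/-- Split (2): for `i ≤ j ≤ k < m`, `j - i` even and `0 ≤ λ ≤ (k-j-1)/2`,
`φ_{i,j,k} = φ_{i,j,j+2λ} ∧ φ*_{j+1,j+2λ+1,k}`. -/
theorem phi_split_and (m i j k lam : ℕ) (t : ℕ → Bool)
    (hij : i ≤ j) (hjk : j ≤ k) (hkm : k < m) (heven : Even (j - i))
    (hlam : 2 * lam + 1 ≤ k - j) :
    phi t i j k = (phi t i j (j + 2 * lam) && phiStar t (j + 1) (j + 2 * lam + 1) k) := by
  unfold phi phiStar
  rw [key t lam j k hlam]
  have e1 : j + 2*lam + 1 - j = 2*lam + 1 := by omega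
  have e2 : (j + 2*lam + 1 - (j+1))/2 = lam := by omega
  have e3 : k + 1 - (j + 2*lam + 1) = k - (j + 2*lam) := by omega
  rw [e1, e2, e3, Bool.and_assoc]
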